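/- Let μ > 0 and σ² > 0. Then the infimum, over all Borel probability measures P supported in [0,∞) with mean ∫ x dP = μ and second moment ∫ x² dP = μ² + σ², of ∫ max{μ, x} dP(x) equals μ, and this infimum is not attained by any such measure. -/

import Mathlib

/-!
Since `max μ x ≥ μ`, every admissible law gives `∫ max μ x ≥ μ`. Equality would force both
`max μ X = μ` and `max μ X = X` almost surely, i.e. `X = μ` a.s., which has variance zero.
The infimum is approached by two-point laws with atoms `μ - m` and `μ + s²/m`, the upper one of
weight `m²/(s² + m²)`: they have mean `μ`, variance `s²`, and
`∫ max μ x = μ + m s²/(s² + m²) < μ + m`, which tends to `μ` as `m → 0`.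
-/

open MeasureTheory

section TwoPoint

variable {α : Type*} [MeasurableSpace α]

noncomputable def twoPoint (p : ℝ) (a b : α) : Measure α :=
  ENNReal.ofReal (1 - p) • Measure.dirac a + ENNReal.ofReal p • Measure.dirac b

lemma isProbabilityMeasure_twoPoint {p : ℝ} (hp0 : 0 ≤ p) (hp1 : p ≤ 1) (a b : α) :
    IsProbabilityMeasure (twoPoint p a b) := by
  constructor
  simp [twoPoint, ← ENNReal.ofReal_add (sub_nonneg.2 hp1) hp0]

lemma twoPoint_apply_eq_one {p : ℝ} (hp0 : 0 ≤ p) (hp1 : p ≤ 1) {a b : α} {s : Set α}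
    (ha : a ∈ s) (hb : b ∈ s) : twoPoint p a b s = 1 := by
  simp [twoPoint, Measure.dirac_apply_of_mem ha, Measure.dirac_apply_of_mem hb,
    ← ENNReal.ofReal_add (sub_nonneg.2 hp1) hp0]

variable [MeasurableSingletonClass α]

lemma integrable_twoPoint (p : ℝ) (a b : α) (f : α → ℝ) : Integrable f (twoPoint p a b) :=
  ((integrable_dirac enorm_lt_top).smul_measure ENNReal.ofReal_ne_top).add_measure
    ((integrable_dirac enorm_lt_top).smul_measure ENNReal.ofReal_ne_top)

lemma integral_twoPoint {p : ℝ} (hp0 : 0 ≤ p) (hp1 : p ≤ 1) (a b : α) (f : α → ℝ) :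
    ∫ x, f x ∂twoPoint p a b = (1 - p) * f a + p * f b := by
  rw [twoPoint, integral_add_measure
      ((integrable_dirac enorm_lt_top).smul_measure ENNReal.ofReal_ne_top)
      ((integrable_dirac enorm_lt_top).smul_measure ENNReal.ofReal_ne_top),
    integral_smul_measure, integral_smul_measure, integral_dirac, integral_dirac,
    ENNReal.toReal_ofReal (sub_nonneg.2 hp1), ENNReal.toReal_ofReal hp0, smul_eq_mul, smul_eq_mul]

end TwoPoint

section MaxWithMean

variable {Ω : Type*} [MeasurableSpace Ω] {P : Measure Ω} [IsProbabilityMeasure P] {X : Ω → ℝ}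

lemma le_integral_max (hX : Integrable X P) (c : ℝ) : c ≤ ∫ ω, max c (X ω) ∂P := by
  simpa using integral_mono (integrable_const c) ((integrable_const c).sup hX)
    fun ω => le_max_left c (X ω)

lemma ae_eq_const_of_integral_max_eq {c : ℝ} (hX : Integrable X P) (hmean : ∫ ω, X ω ∂P = c)
    (hmax : ∫ ω, max c (X ω) ∂P = c) : X =ᵐ[P] fun _ => c := by
  have hmaxX : Integrable (fun ω => max c (X ω)) P := (integrable_const c).sup hX
  have hmax_eq_c : (fun ω => max c (X ω) - c) =ᵐ[P] 0 := by
    refine (integral_eq_zero_iff_of_nonneg (fun ω => sub_nonneg.2 (le_max_left _ _))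
      (hmaxX.sub (integrable_const c))).1 ?_
    simp [integral_sub hmaxX (integrable_const c), hmax]
  have hmax_eq_X : (fun ω => max c (X ω) - X ω) =ᵐ[P] 0 := by
    refine (integral_eq_zero_iff_of_nonneg (fun ω => sub_nonneg.2 (le_max_right _ _))
      (hmaxX.sub hX)).1 ?_
    rw [integral_sub hmaxX hX, hmax, hmean, sub_self]
  filter_upwards [hmax_eq_c, hmax_eq_X] with ω h₁ h₂
  simp only [Pi.zero_apply, sub_eq_zero] at h₁ h₂
  rw [← h₂, h₁]

end MaxWithMean

section TwoPointOfMeanVar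

variable {μ s2 m : ℝ}

noncomputable def twoPointOfMeanVar (μ s2 m : ℝ) : Measure ℝ :=
  twoPoint (m ^ 2 / (s2 + m ^ 2)) (μ - m) (μ + s2 / m)

lemma twoPointOfMeanVar_weight_mem_Icc (hs2 : 0 ≤ s2) (m : ℝ) :
    m ^ 2 / (s2 + m ^ 2) ∈ Set.Icc (0 : ℝ) 1 :=
  ⟨by positivity, div_le_one_of_le₀ (by linarith) (by positivity)⟩

lemma isProbabilityMeasure_twoPointOfMeanVar (hs2 : 0 ≤ s2) (μ m : ℝ) :
    IsProbabilityMeasure (twoPointOfMeanVar μ s2 m) :=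
  have hp := twoPointOfMeanVar_weight_mem_Icc hs2 m
  isProbabilityMeasure_twoPoint hp.1 hp.2 _ _

lemma twoPointOfMeanVar_Ici (hs2 : 0 ≤ s2) (hm : 0 < m) (hmμ : m ≤ μ) :
    twoPointOfMeanVar μ s2 m (Set.Ici 0) = 1 :=
  have hp := twoPointOfMeanVar_weight_mem_Icc hs2 m
  twoPoint_apply_eq_one hp.1 hp.2 (Set.mem_Ici.2 (sub_nonneg.2 hmμ))
    (Set.mem_Ici.2 (by have := div_nonneg hs2 hm.le; linarith))

lemma integral_twoPointOfMeanVar (hs2 : 0 ≤ s2) (hm : m ≠ 0) :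
    ∫ x, x ∂twoPointOfMeanVar μ s2 m = μ := by
  have hp := twoPointOfMeanVar_weight_mem_Icc hs2 m
  have hden : s2 + m ^ 2 ≠ 0 := by positivity
  rw [twoPointOfMeanVar, integral_twoPoint hp.1 hp.2]
  field_simp
  ring

lemma integral_sq_twoPointOfMeanVar (hs2 : 0 ≤ s2) (hm : m ≠ 0) :
    ∫ x, x ^ 2 ∂twoPointOfMeanVar μ s2 m = μ ^ 2 + s2 := by
  have hp := twoPointOfMeanVar_weight_mem_Icc hs2 m
  have hden : s2 + m ^ 2 ≠ 0 := by positivity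
  rw [twoPointOfMeanVar, integral_twoPoint hp.1 hp.2]
  field_simp
  ring

lemma integral_max_twoPointOfMeanVar_lt (hs2 : 0 < s2) (hm : 0 < m) :
    ∫ x, max μ x ∂twoPointOfMeanVar μ s2 m < μ + m := by
  have hp := twoPointOfMeanVar_weight_mem_Icc hs2.le m
  have hden : 0 < s2 + m ^ 2 := by positivity
  rw [twoPointOfMeanVar, integral_twoPoint hp.1 hp.2, max_eq_left (by linarith),
    max_eq_right (by have := div_pos hs2 hm; linarith)]
  have : m ^ 2 / (s2 + m ^ 2) * (s2 / m) < m := by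
    rw [div_mul_div_comm, div_lt_iff₀ (by positivity)]
    nlinarith [pow_pos hm 4]
  linarith

end TwoPointOfMeanVar

theorem stmt17 (μ s2 : ℝ) (hμ : 0 < μ) (hs2 : 0 < s2) :
    sInf {v : ℝ | ∃ P : Measure ℝ, IsProbabilityMeasure P ∧ P (Set.Ici 0) = 1 ∧
        Integrable (fun x : ℝ => x) P ∧ Integrable (fun x : ℝ => x ^ 2) P ∧
        (∫ x, x ∂P) = μ ∧ (∫ x, x ^ 2 ∂P) = μ ^ 2 + s2 ∧
        v = ∫ x, max μ x ∂P} = μ ∧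
    ∀ P : Measure ℝ, IsProbabilityMeasure P → P (Set.Ici 0) = 1 →
      Integrable (fun x : ℝ => x) P → Integrable (fun x : ℝ => x ^ 2) P →
      (∫ x, x ∂P) = μ → (∫ x, x ^ 2 ∂P) = μ ^ 2 + s2 →
      (∫ x, max μ x ∂P) ≠ μ := by
  set S := {v : ℝ | ∃ P : Measure ℝ, IsProbabilityMeasure P ∧ P (Set.Ici 0) = 1 ∧
      Integrable (fun x : ℝ => x) P ∧ Integrable (fun x : ℝ => x ^ 2) P ∧
      (∫ x, x ∂P) = μ ∧ (∫ x, x ^ 2 ∂P) = μ ^ 2 + s2 ∧ v = ∫ x, max μ x ∂P}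
  have hlower : ∀ v ∈ S, μ ≤ v := by
    rintro v ⟨P, hP, -, hX, -, -, -, rfl⟩
    exact le_integral_max hX μ
  have happrox : ∀ m, 0 < m → m ≤ μ → ∃ v ∈ S, v < μ + m := fun m hm hmμ =>
    ⟨_, ⟨twoPointOfMeanVar μ s2 m, isProbabilityMeasure_twoPointOfMeanVar hs2.le μ m,
      twoPointOfMeanVar_Ici hs2.le hm hmμ, integrable_twoPoint _ _ _ _,
      integrable_twoPoint _ _ _ _, integral_twoPointOfMeanVar hs2.le hm.ne',
      integral_sq_twoPointOfMeanVar hs2.le hm.ne', rfl⟩,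
      integral_max_twoPointOfMeanVar_lt hs2 hm⟩
  refine ⟨csInf_eq_of_forall_ge_of_forall_gt_exists_lt ?_ hlower fun w hw => ?_, ?_⟩
  · obtain ⟨v, hv, -⟩ := happrox μ hμ le_rfl
    exact ⟨v, hv⟩
  · obtain ⟨v, hv, hvw⟩ := happrox (min μ (w - μ)) (lt_min hμ (sub_pos.2 hw)) (min_le_left _ _)
    exact ⟨v, hv, hvw.trans_le (by linarith [min_le_right μ (w - μ)])⟩
  · intro P _ _ hX _ hmean hsq hmax
    have hconst := ae_eq_const_of_integral_max_eq hX hmean hmax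
    have hsq_const : (fun x : ℝ => x ^ 2) =ᵐ[P] fun _ => μ ^ 2 := hconst.fun_comp (· ^ 2)
    have : ∫ x, x ^ 2 ∂P = μ ^ 2 := by simp [integral_congr_ae hsq_const]
    linarith
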